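/- For any function f : {0,1}^n → {0,1}, the series Σ_{k=2}^∞ (n^k/k!) · π^T Q_{∂f} (Q − I)^{k−2} Q_{∂f} 1 converges and 2·Σ_{k=2}^∞ (n^k/k!) · π^T Q_{∂f} (Q − I)^{k−2} Q_{∂f} 1 = ( n·π^T Q_{∂f} 1 )² + 2·Σ_{S ⊆ [n], S ≠ ∅} ( (e^{−|S|} − (1 − |S|)) / |S|² ) · ( n·π^T Q_{∂f} χ_S )². -/
import Mathlib


open Finset Real
open scoped symmDiff

noncomputable section

/-- The real value of a bit. -/
def bval (b : Bool) : ℝ := if b then 1 else 0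

/-- The `p`-biased product measure on `{0,1}^n`, as a weight function. -/
def pw (n : ℕ) (p : ℝ) (x : Fin n → Bool) : ℝ := ∏ i, if x i then p else 1 - p

/-- Expectation with respect to the `p`-biased measure. -/
def expect (n : ℕ) (p : ℝ) (f : (Fin n → Bool) → ℝ) : ℝ := ∑ x, pw n p x * f x

/-- Inner product `⟨f,g⟩ = E[f g]`. -/
def binner (n : ℕ) (p : ℝ) (f g : (Fin n → Bool) → ℝ) : ℝ := expect n p fun x => f x * g x

/-- The `p`-biased character `χ_S`. -/
def chi (n : ℕ) (p : ℝ) (S : Finset (Fin n)) (x : Fin n → Bool) : ℝ :=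
  ∏ i ∈ S, (bval (x i) - p) / Real.sqrt (p * (1 - p))

/-- The Fourier–Walsh coefficient `f̂(S) = ⟨f, χ_S⟩`. -/
def fhat (n : ℕ) (p : ℝ) (f : (Fin n → Bool) → ℝ) (S : Finset (Fin n)) : ℝ :=
  binner n p f (chi n p S)

/-- The discrete derivative `D_i f(x) = f(x^{i→1}) - f(x^{i→0})`. -/
def Dop (n : ℕ) (f : (Fin n → Bool) → ℝ) (i : Fin n) (x : Fin n → Bool) : ℝ :=
  f (Function.update x i true) - f (Function.update x i false)

/-- The influence `I_i(f) = P(f(X) ≠ f(R_i X))` where the `i`-th bit is resampled. -/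
def influence (n : ℕ) (p : ℝ) (f : (Fin n → Bool) → ℝ) (i : Fin n) : ℝ :=
  ∑ x, pw n p x *
    ∑ b : Bool, (if b then p else 1 - p) *
      (if f (Function.update x i b) ≠ f x then 1 else 0)

/-- The transition matrix `Q` of the jump chain of the `p`-biased random walk. -/
def Qmat (n : ℕ) (p : ℝ) (x y : Fin n → Bool) : ℝ :=
  if x = y then (1 / (n : ℝ)) * ∑ i, ((1 - p) * (1 - bval (x i)) + p * bval (x i))
  else if (Finset.univ.filter fun i => x i ≠ y i).card = 1 then
    (1 / (n : ℝ)) * ∑ i ∈ Finset.univ.filter (fun i => x i ≠ y i),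
      (p * (1 - bval (x i)) + (1 - p) * bval (x i))
  else 0

/-- `Q_{∂f}(x,y) = Q(x,y) · 1(f(x) ≠ f(y))`. -/
def Qdel (n : ℕ) (p : ℝ) (f : (Fin n → Bool) → ℝ) (x y : Fin n → Bool) : ℝ :=
  Qmat n p x y * (if f x ≠ f y then 1 else 0)

/-- `π^T M h = Σ_{x,y} π(x) M(x,y) h(y)`. -/
def pTMh (n : ℕ) (p : ℝ) (M : (Fin n → Bool) → (Fin n → Bool) → ℝ)
    (h : (Fin n → Bool) → ℝ) : ℝ :=
  ∑ x, ∑ y, pw n p x * M x y * h y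

/-- `Q` as a matrix. -/
def QM (n : ℕ) (p : ℝ) : Matrix (Fin n → Bool) (Fin n → Bool) ℝ :=
  Matrix.of fun x y => Qmat n p x y

/-- `Q_{∂f}` as a matrix. -/
def QdelM (n : ℕ) (p : ℝ) (f : (Fin n → Bool) → ℝ) :
    Matrix (Fin n → Bool) (Fin n → Bool) ℝ :=
  Matrix.of fun x y => Qdel n p f x y

/-- `π^T M h` for a matrix `M`. -/
def pTM (n : ℕ) (p : ℝ) (M : Matrix (Fin n → Bool) (Fin n → Bool) ℝ)
    (h : (Fin n → Bool) → ℝ) : ℝ :=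
  ∑ x, ∑ y, pw n p x * M x y * h y

end

noncomputable def wt (p : ℝ) (b : Bool) : ℝ := if b then p else 1 - p

variable {n : ℕ} {p : ℝ}




lemma pw_eq (x : Fin n → Bool) : pw n p x = ∏ i, wt p (x i) := rfl

lemma sum_pw : ∑ x : Fin n → Bool, pw n p x = 1 := by
  have h := Finset.prod_univ_sum (fun _ : Fin n => (Finset.univ : Finset Bool)) (fun _ b => wt p b)
  simp only [Fintype.piFinset_univ] at h
  simp only [pw_eq]
  rw [← h]
  simp [wt]

lemma factor_eq (hp0 : 0 < p) (hp1 : p < 1) (a b : Bool) :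
    ((bval a - p) / Real.sqrt (p * (1 - p))) * ((bval b - p) / Real.sqrt (p * (1 - p))) + 1
      = if a = b then (wt p a)⁻¹ else 0 := by
  have hσ : (0:ℝ) < p * (1 - p) := by nlinarith
  have hs : Real.sqrt (p * (1 - p)) * Real.sqrt (p * (1 - p)) = p * (1 - p) :=
    Real.mul_self_sqrt hσ.le
  have h0 : p ≠ 0 := hp0.ne'
  have h1 : (1:ℝ) - p ≠ 0 := by linarith
  rw [div_mul_div_comm, hs]
  cases a <;> cases b <;> simp [bval, wt] <;> field_simp <;> ring_nf <;> simp

-- delta kernel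
lemma chi_kernel (hp0 : 0 < p) (hp1 : p < 1) (x y : Fin n → Bool) :
    ∑ S : Finset (Fin n), chi n p S x * chi n p S y =
      if x = y then (pw n p x)⁻¹ else 0 := by
  have key : ∑ S : Finset (Fin n), chi n p S x * chi n p S y
      = ∏ i, (((bval (x i) - p) / Real.sqrt (p * (1 - p))) *
          ((bval (y i) - p) / Real.sqrt (p * (1 - p))) + 1) := by
    rw [Finset.prod_add]
    rw [← Finset.powerset_univ]
    refine Finset.sum_congr rfl fun S _ => ?_
    simp [chi, Finset.prod_mul_distrib]
  rw [key]
  by_cases hxy : x = y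
  · subst hxy
    rw [if_pos rfl, pw_eq, ← Finset.prod_inv_distrib]
    refine Finset.prod_congr rfl fun i _ => ?_
    rw [factor_eq hp0 hp1, if_pos rfl]
  · rw [if_neg hxy]
    obtain ⟨i, hi⟩ : ∃ i, x i ≠ y i := by
      by_contra h; push_neg at h; exact hxy (funext h)
    apply Finset.prod_eq_zero (Finset.mem_univ i)
    rw [factor_eq hp0 hp1, if_neg hi]


lemma pw_pos (hp0 : 0 < p) (hp1 : p < 1) (x : Fin n → Bool) : 0 < pw n p x := by
  rw [pw_eq]
  exact Finset.prod_pos fun i _ => by cases x i <;> simp [wt] <;> linarith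

section
variable (hp0 : 0 < p) (hp1 : p < 1)

lemma hsig (hp0 : 0 < p) (hp1 : p < 1) :
    Real.sqrt (p * (1 - p)) * Real.sqrt (p * (1 - p)) = p * (1 - p) :=
  Real.mul_self_sqrt (by nlinarith)

lemma sum_bool_cc (hp0 : 0 < p) (hp1 : p < 1) :
    ∑ b : Bool, wt p b * (((bval b - p) / Real.sqrt (p * (1 - p))) *
      ((bval b - p) / Real.sqrt (p * (1 - p)))) = 1 := by
  have h0 : p ≠ 0 := hp0.ne'
  have h1 : (1:ℝ) - p ≠ 0 := by linarith
  rw [Fintype.sum_bool]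
  norm_num [bval, wt]
  rw [div_mul_div_comm, div_mul_div_comm, hsig hp0 hp1]
  field_simp
  ring

lemma sum_bool_c (hp0 : 0 < p) (hp1 : p < 1) :
    ∑ b : Bool, wt p b * ((bval b - p) / Real.sqrt (p * (1 - p))) = 0 := by
  rw [Fintype.sum_bool]
  norm_num [bval, wt]
  ring

lemma sum_bool_one : ∑ b : Bool, wt p b = 1 := by
  rw [Fintype.sum_bool]; norm_num [wt]

lemma chi_eq_prod_ite (S : Finset (Fin n)) (x : Fin n → Bool) :
    chi n p S x = ∏ i, (if i ∈ S then (bval (x i) - p) / Real.sqrt (p * (1 - p)) else 1) := by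
  rw [Finset.prod_ite_mem, Finset.univ_inter, chi]

/-- Fourier expansion. -/
lemma expansion (hp0 : 0 < p) (hp1 : p < 1) (g : (Fin n → Bool) → ℝ) (x : Fin n → Bool) :
    g x = ∑ S : Finset (Fin n), fhat n p g S * chi n p S x := by
  have step : ∑ S : Finset (Fin n), fhat n p g S * chi n p S x
      = ∑ y, (pw n p y * g y) * ∑ S : Finset (Fin n), chi n p S y * chi n p S x := by
    unfold fhat binner
    show (∑ S : Finset (Fin n), (∑ y, pw n p y * (g y * chi n p S y)) * chi n p S x) = _
    calc (∑ S : Finset (Fin n), (∑ y, pw n p y * (g y * chi n p S y)) * chi n p S x)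
        = ∑ S : Finset (Fin n), ∑ y, (pw n p y * g y) * (chi n p S y * chi n p S x) := by
          refine Finset.sum_congr rfl fun S _ => ?_
          rw [Finset.sum_mul]
          exact Finset.sum_congr rfl fun y _ => by ring
      _ = ∑ y, ∑ S : Finset (Fin n), (pw n p y * g y) * (chi n p S y * chi n p S x) :=
          Finset.sum_comm
      _ = ∑ y, (pw n p y * g y) * ∑ S : Finset (Fin n), chi n p S y * chi n p S x := by
          exact Finset.sum_congr rfl fun y _ => (Finset.mul_sum _ _ _).symm
  rw [step]
  rw [Finset.sum_eq_single x]
  · rw [chi_kernel hp0 hp1, if_pos rfl]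
    field_simp [(pw_pos hp0 hp1 x).ne']
  · intro y _ hy
    rw [chi_kernel hp0 hp1, if_neg hy, mul_zero]
  · intro h; exact absurd (Finset.mem_univ x) h

/-- Orthonormality. -/
lemma chi_orth (hp0 : 0 < p) (hp1 : p < 1) (S T : Finset (Fin n)) :
    binner n p (chi n p S) (chi n p T) = if S = T then 1 else 0 := by
  have key : binner n p (chi n p S) (chi n p T)
      = ∏ i, ∑ b : Bool, (wt p b *
          ((if i ∈ S then (bval b - p) / Real.sqrt (p * (1 - p)) else 1) *
           (if i ∈ T then (bval b - p) / Real.sqrt (p * (1 - p)) else 1))) := by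
    rw [Finset.prod_univ_sum, Fintype.piFinset_univ]
    show (∑ x, pw n p x * (chi n p S x * chi n p T x)) = _
    refine Finset.sum_congr rfl fun x _ => ?_
    rw [pw_eq, chi_eq_prod_ite S x, chi_eq_prod_ite T x, ← Finset.prod_mul_distrib,
      ← Finset.prod_mul_distrib]
  rw [key]
  have factor : ∀ i : Fin n, (∑ b : Bool, (wt p b *
          ((if i ∈ S then (bval b - p) / Real.sqrt (p * (1 - p)) else 1) *
           (if i ∈ T then (bval b - p) / Real.sqrt (p * (1 - p)) else 1))))
      = if (i ∈ S ↔ i ∈ T) then 1 else 0 := by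
    intro i
    by_cases hiS : i ∈ S <;> by_cases hiT : i ∈ T
    · simp only [if_pos hiS, if_pos hiT]
      rw [if_pos (iff_of_true hiS hiT)]
      exact sum_bool_cc hp0 hp1
    · simp only [if_pos hiS, if_neg hiT, mul_one]
      rw [if_neg (by simp [hiS, hiT])]
      exact sum_bool_c hp0 hp1
    · simp only [if_neg hiS, if_pos hiT, one_mul]
      rw [if_neg (by simp [hiS, hiT])]
      exact sum_bool_c hp0 hp1
    · simp only [if_neg hiS, if_neg hiT, mul_one]
      rw [if_pos (by simp [hiS, hiT])]
      exact sum_bool_one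
  rw [Finset.prod_congr rfl fun i _ => factor i]
  by_cases hST : S = T
  · subst hST; simp
  · rw [if_neg hST]
    obtain ⟨i, hi⟩ : ∃ i, ¬(i ∈ S ↔ i ∈ T) := by
      by_contra h; push_neg at h
      exact hST (Finset.ext fun i => (h i))
    exact Finset.prod_eq_zero (Finset.mem_univ i) (if_neg hi)

end


lemma update_cond (x y : Fin n → Bool) (i : Fin n) :
    y = Function.update x i (y i) ↔ ∀ j, j ≠ i → y j = x j := by
  constructor
  · intro h j hj
    conv_lhs => rw [h]
    simp [Function.update, hj]
  · intro h
    funext j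
    by_cases hj : j = i
    · subst hj; simp
    · rw [Function.update_of_ne hj]; exact h j hj

lemma wt_eq_bval (b : Bool) : (1 - p) * (1 - bval b) + p * bval b = wt p b := by
  cases b <;> simp [bval, wt]

lemma wt_eq_bval' (b : Bool) : p * (1 - bval b) + (1 - p) * bval b = wt p (!b) := by
  cases b <;> simp [bval, wt]

/-- Alternative formula for `Qmat`. -/
lemma Qmat_eq (x y : Fin n → Bool) :
    Qmat n p x y = (1 / (n : ℝ)) *
      ∑ i, (if y = Function.update x i (y i) then wt p (y i) else 0) := by
  classical
  set D := Finset.univ.filter (fun i => x i ≠ y i) with hD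
  have hcond : ∀ i, (y = Function.update x i (y i)) ↔ D ⊆ {i} := by
    intro i
    rw [update_cond]
    constructor
    · intro h j hj
      rw [hD, Finset.mem_filter] at hj
      rw [Finset.mem_singleton]
      by_contra hji
      exact hj.2 (h j hji).symm
    · intro h j hj
      by_contra hne
      have : j ∈ D := by rw [hD, Finset.mem_filter]; exact ⟨Finset.mem_univ j, fun e => hne e.symm⟩
      have := h this
      rw [Finset.mem_singleton] at this
      exact hj this
  by_cases hxy : x = y
  · subst hxy
    rw [Qmat, if_pos rfl]
    congr 1
    have hDe : D = ∅ := by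
      rw [hD]; ext j; simp
    refine Finset.sum_congr rfl fun i _ => ?_
    rw [if_pos ((hcond i).mpr (by rw [hDe]; exact Finset.empty_subset _)), wt_eq_bval]
  · rw [Qmat, if_neg hxy]
    by_cases hc : D.card = 1
    · obtain ⟨j, hj⟩ := Finset.card_eq_one.mp hc
      rw [if_pos (by rw [← hD]; exact hc)]
      congr 1
      rw [← hD, hj, Finset.sum_singleton]
      have hxj : x j ≠ y j := by
        have : j ∈ D := by rw [hj]; exact Finset.mem_singleton_self j
        rw [hD, Finset.mem_filter] at this; exact this.2
      have hyj : y j = !(x j) := by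
        cases h1 : x j <;> cases h2 : y j <;> simp_all
      rw [Finset.sum_eq_single j]
      · rw [if_pos ((hcond j).mpr (by rw [hj]))]
        rw [wt_eq_bval', hyj]
      · intro i _ hij
        rw [if_neg]
        intro h
        have := (hcond i).mp h
        rw [hj] at this
        have := this (Finset.mem_singleton_self j)
        rw [Finset.mem_singleton] at this
        exact hij this.symm
      · intro h; exact absurd (Finset.mem_univ j) h
    · rw [if_neg (by rw [← hD]; exact hc)]
      have : ∀ i, ¬(y = Function.update x i (y i)) := by
        intro i h
        have hsub := (hcond i).mp h
        have := Finset.card_le_card hsub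
        rw [Finset.card_singleton] at this
        interval_cases hDc : D.card
        · rw [Finset.card_eq_zero] at hDc
          apply hxy
          funext j
          by_contra hne
          have : j ∈ D := by rw [hD, Finset.mem_filter]; exact ⟨Finset.mem_univ j, hne⟩
          simp [hDc] at this
        · exact hc rfl
      rw [Finset.sum_congr rfl fun i _ => if_neg (this i), Finset.sum_const_zero, mul_zero]

lemma filter_update (x : Fin n → Bool) (i : Fin n) :
    Finset.univ.filter (fun y : Fin n → Bool => y = Function.update x i (y i))
      = {Function.update x i true, Function.update x i false} := by
  ext y
  simp only [Finset.mem_filter, Finset.mem_univ, true_and, Finset.mem_insert,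
    Finset.mem_singleton]
  constructor
  · intro h
    cases hb : y i
    · right; rw [← hb]; exact h
    · left; rw [← hb]; exact h
  · rintro (h | h) <;> rw [h, Function.update_self]

lemma update_ne (x : Fin n → Bool) (i : Fin n) :
    Function.update x i true ≠ Function.update x i false := by
  intro h
  have := congrFun h i
  simp at this

lemma chi_update_notMem {S : Finset (Fin n)} {i : Fin n} (hi : i ∉ S) (x : Fin n → Bool)
    (b : Bool) : chi n p S (Function.update x i b) = chi n p S x := by
  refine Finset.prod_congr rfl fun j hj => ?_
  rw [Function.update_of_ne (fun e => hi (by rwa [e] at hj))]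

lemma chi_update_mem {S : Finset (Fin n)} {i : Fin n} (hi : i ∈ S) (x : Fin n → Bool)
    (b : Bool) : chi n p S (Function.update x i b)
      = ((bval b - p) / Real.sqrt (p * (1 - p))) * ∏ j ∈ S.erase i,
          (bval (x j) - p) / Real.sqrt (p * (1 - p)) := by
  rw [chi, ← Finset.mul_prod_erase S _ hi, Function.update_self]
  congr 1
  refine Finset.prod_congr rfl fun j hj => ?_
  rw [Function.update_of_ne (Finset.ne_of_mem_erase hj)]

/-- eigen: `QM *ᵥ χ_S = ((n - |S|)/n) • χ_S` -/
lemma QM_mulVec_chi (hp0 : 0 < p) (hp1 : p < 1) (S : Finset (Fin n)) :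
    (QM n p).mulVec (chi n p S) = fun x => (((n : ℝ) - S.card) / n) * chi n p S x := by
  funext x
  show (∑ y, Qmat n p x y * chi n p S y) = _
  have step1 : ∀ y, Qmat n p x y * chi n p S y = (1 / (n:ℝ)) *
      ∑ i, (if y = Function.update x i (y i) then wt p (y i) * chi n p S y else 0) := by
    intro y
    rw [Qmat_eq, mul_assoc, Finset.sum_mul]
    congr 1
    refine Finset.sum_congr rfl fun i _ => ?_
    rw [ite_mul, zero_mul]
  rw [Finset.sum_congr rfl fun y _ => step1 y, ← Finset.mul_sum, Finset.sum_comm]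
  have inner : ∀ i : Fin n, (∑ y, if y = Function.update x i (y i)
        then wt p (y i) * chi n p S y else 0)
      = if i ∈ S then 0 else chi n p S x := by
    intro i
    rw [← Finset.sum_filter, filter_update, Finset.sum_pair (update_ne x i)]
    rw [Function.update_self, Function.update_self]
    by_cases hi : i ∈ S
    · rw [if_pos hi, chi_update_mem hi, chi_update_mem hi]
      have := sum_bool_c hp0 hp1
      rw [Fintype.sum_bool] at this
      have expand : wt p true * ((bval true - p) / Real.sqrt (p * (1 - p)) *
            ∏ j ∈ S.erase i, (bval (x j) - p) / Real.sqrt (p * (1 - p)))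
          + wt p false * ((bval false - p) / Real.sqrt (p * (1 - p)) *
            ∏ j ∈ S.erase i, (bval (x j) - p) / Real.sqrt (p * (1 - p)))
          = (wt p true * ((bval true - p) / Real.sqrt (p * (1 - p)))
            + wt p false * ((bval false - p) / Real.sqrt (p * (1 - p))))
            * ∏ j ∈ S.erase i, (bval (x j) - p) / Real.sqrt (p * (1 - p)) := by ring
      rw [expand, this, zero_mul]
    · rw [if_neg hi, chi_update_notMem hi, chi_update_notMem hi]
      have := sum_bool_one (p := p)
      rw [Fintype.sum_bool] at this
      calc wt p true * chi n p S x + wt p false * chi n p S x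
          = (wt p true + wt p false) * chi n p S x := by ring
        _ = chi n p S x := by rw [this, one_mul]
  rw [Finset.sum_congr rfl fun i _ => inner i]
  rw [Finset.sum_ite, Finset.sum_const_zero, zero_add, Finset.sum_const]
  have hcard : (Finset.univ.filter (fun i : Fin n => ¬ i ∈ S)).card = n - S.card := by
    have : Finset.univ.filter (fun i : Fin n => ¬ i ∈ S) = Finset.univ \ S := by
      ext j; simp
    rw [this, Finset.card_sdiff_of_subset (Finset.subset_univ S), Finset.card_univ, Fintype.card_fin]
  rw [hcard, nsmul_eq_mul]
  rw [Nat.cast_sub (by simpa using S.card_le_univ)]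
  ring

lemma QM_sub_one_mulVec_chi (hn : 1 ≤ n) (hp0 : 0 < p) (hp1 : p < 1) (S : Finset (Fin n)) :
    (QM n p - 1).mulVec (chi n p S) = fun x => (-(S.card : ℝ) / n) * chi n p S x := by
  have hne : (n : ℝ) ≠ 0 := Nat.cast_ne_zero.mpr (by omega)
  funext x
  rw [Matrix.sub_mulVec, Pi.sub_apply, QM_mulVec_chi hp0 hp1, Matrix.one_mulVec]
  field_simp
  ring

lemma QM_sub_one_pow_mulVec_chi (hn : 1 ≤ n) (hp0 : 0 < p) (hp1 : p < 1)
    (S : Finset (Fin n)) (k : ℕ) :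
    ((QM n p - 1) ^ k).mulVec (chi n p S)
      = fun x => (-(S.card : ℝ) / n) ^ k * chi n p S x := by
  induction k with
  | zero => simp [Matrix.one_mulVec]
  | succ k ih =>
    rw [pow_succ, ← Matrix.mulVec_mulVec, QM_sub_one_mulVec_chi hn hp0 hp1]
    have : (fun x => (-(S.card : ℝ) / n) * chi n p S x)
        = (-(S.card : ℝ) / n) • chi n p S := rfl
    rw [this, Matrix.mulVec_smul, ih]
    funext x
    simp [Pi.smul_apply, smul_eq_mul]
    ring

lemma pw_Qmat_symm (x y : Fin n → Bool) :
    pw n p x * Qmat n p x y = pw n p y * Qmat n p y x := by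
  have key : ∀ i : Fin n,
      pw n p x * (if y = Function.update x i (y i) then wt p (y i) else 0)
      = pw n p y * (if x = Function.update y i (x i) then wt p (x i) else 0) := by
    intro i
    by_cases h : y = Function.update x i (y i)
    · have h' : x = Function.update y i (x i) := by
        rw [update_cond]; intro j hj; exact ((update_cond x y i).mp h j hj).symm
      rw [if_pos h, if_pos h', mul_comm (pw n p x), mul_comm (pw n p y)]
      rw [pw_eq, pw_eq, ← Finset.mul_prod_erase Finset.univ _ (Finset.mem_univ i),
        ← Finset.mul_prod_erase Finset.univ (fun j => wt p (y j)) (Finset.mem_univ i)]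
      have : ∏ j ∈ Finset.univ.erase i, wt p (x j) = ∏ j ∈ Finset.univ.erase i, wt p (y j) := by
        refine Finset.prod_congr rfl fun j hj => ?_
        rw [(update_cond x y i).mp h j (Finset.ne_of_mem_erase hj)]
      rw [this]; ring
    · have h' : ¬ x = Function.update y i (x i) := by
        intro hx
        exact h ((update_cond x y i).mpr (fun j hj => ((update_cond y x i).mp hx j hj).symm))
      rw [if_neg h, if_neg h', mul_zero, mul_zero]

  calc pw n p x * Qmat n p x y
      = 1/(n:ℝ) * ∑ i, pw n p x * (if y = Function.update x i (y i) then wt p (y i) else 0) := by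
        rw [Qmat_eq, ← Finset.mul_sum]; ring
    _ = 1/(n:ℝ) * ∑ i, pw n p y * (if x = Function.update y i (x i) then wt p (x i) else 0) := by
        rw [Finset.sum_congr rfl fun i _ => key i]
    _ = pw n p y * Qmat n p y x := by rw [Qmat_eq, ← Finset.mul_sum]; ring

lemma pw_Qdel_symm (f : (Fin n → Bool) → ℝ) (x y : Fin n → Bool) :
    pw n p x * Qdel n p f x y = pw n p y * Qdel n p f y x := by
  unfold Qdel
  rw [← mul_assoc, ← mul_assoc, pw_Qmat_symm]
  congr 2
  simp only [ne_eq, eq_comm]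

/-- transfer: `π^T Q_{∂f} g = ⟨v, g⟩` where `v = Q_{∂f} 1`. -/
lemma pT_Qdel (f : (Fin n → Bool) → ℝ) (g : (Fin n → Bool) → ℝ) :
    ∑ x, pw n p x * ((QdelM n p f).mulVec g) x
      = binner n p ((QdelM n p f).mulVec (fun _ => 1)) g := by
  unfold binner
  show _ = ∑ y, pw n p y * (((QdelM n p f).mulVec (fun _ => 1)) y * g y)
  have lhs_eq : ∑ x, pw n p x * ((QdelM n p f).mulVec g) x
      = ∑ x, ∑ y, pw n p x * Qdel n p f x y * g y := by
    refine Finset.sum_congr rfl fun x _ => ?_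
    show pw n p x * ∑ y, Qdel n p f x y * g y = _
    rw [Finset.mul_sum]
    exact Finset.sum_congr rfl fun y _ => by ring
  rw [lhs_eq]
  rw [Finset.sum_congr rfl fun x (_ : x ∈ Finset.univ) => Finset.sum_congr rfl
    fun y (_ : y ∈ Finset.univ) => by rw [pw_Qdel_symm]]
  rw [Finset.sum_comm]
  refine Finset.sum_congr rfl fun y _ => ?_
  show ∑ x, pw n p y * Qdel n p f y x * g y = pw n p y * ((∑ x, Qdel n p f y x * 1) * g y)
  rw [Finset.sum_mul, Finset.mul_sum]
  exact Finset.sum_congr rfl fun x _ => by ring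

lemma summable_aux (x : ℝ) : Summable (fun k : ℕ => x ^ k / (Nat.factorial (k + 2))) := by
  apply Summable.of_abs
  refine Summable.of_nonneg_of_le (fun k => abs_nonneg _) (fun k => ?_)
    (Real.summable_pow_div_factorial |x|)
  rw [abs_div, abs_pow, Nat.abs_cast]
  gcongr
  omega

lemma tsum_shift2 (x : ℝ) :
    ∑' k : ℕ, x ^ (k + 2) / (Nat.factorial (k + 2)) = Real.exp x - 1 - x := by
  have hs : Summable (fun k : ℕ => x ^ k / (Nat.factorial k)) :=
    Real.summable_pow_div_factorial x
  have hexp : Real.exp x = ∑' k : ℕ, x ^ k / (Nat.factorial k) := by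
    rw [Real.exp_eq_exp_ℝ, NormedSpace.exp_eq_tsum_div]
  have h2 := Summable.sum_add_tsum_nat_add (f := fun k : ℕ => x ^ k / (Nat.factorial k)) 2 hs
  rw [← hexp] at h2
  have hr : ∑ i ∈ Finset.range 2, x ^ i / (Nat.factorial i) = 1 + x := by
    simp [Finset.sum_range_succ, Nat.factorial]
  rw [hr] at h2
  linarith [h2]

lemma tsum_E_pos (s : ℝ) (hs : s ≠ 0) :
    ∑' k : ℕ, (-s) ^ k / (Nat.factorial (k + 2))
      = (Real.exp (-s) - (1 - s)) / s ^ 2 := by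
  have key : ∀ k : ℕ, (-s) ^ k / (Nat.factorial (k + 2))
      = ((-s) ^ (k + 2) / (Nat.factorial (k + 2))) * (s ^ 2)⁻¹ := by
    intro k
    rw [pow_add]
    have : (-s) ^ 2 = s ^ 2 := by ring
    rw [this]
    field_simp
  rw [tsum_congr key, tsum_mul_right, tsum_shift2]
  field_simp
  ring

lemma tsum_E_zero :
    ∑' k : ℕ, ((0:ℝ)) ^ k / (Nat.factorial (k + 2)) = 1 / 2 := by
  rw [tsum_eq_single 0]
  · norm_num [Nat.factorial]
  · intro k hk
    rw [zero_pow hk, zero_div]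

lemma pTM_eq (M : Matrix (Fin n → Bool) (Fin n → Bool) ℝ) (h : (Fin n → Bool) → ℝ) :
    pTM n p M h = ∑ x, pw n p x * M.mulVec h x := by
  unfold pTM
  refine Finset.sum_congr rfl fun x _ => ?_
  show ∑ y, pw n p x * M x y * h y = pw n p x * ∑ y, M x y * h y
  rw [Finset.mul_sum]
  exact Finset.sum_congr rfl fun y _ => by ring

lemma binner_sum_right (g : (Fin n → Bool) → ℝ) (c : Finset (Fin n) → ℝ) :
    binner n p g (fun x => ∑ S : Finset (Fin n), c S * chi n p S x)
      = ∑ S : Finset (Fin n), c S * binner n p g (chi n p S) := by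
  unfold binner
  show (∑ x, pw n p x * (g x * ∑ S : Finset (Fin n), c S * chi n p S x)) = _
  calc (∑ x, pw n p x * (g x * ∑ S : Finset (Fin n), c S * chi n p S x))
      = ∑ x, ∑ S : Finset (Fin n), c S * (pw n p x * (g x * chi n p S x)) := by
        refine Finset.sum_congr rfl fun x _ => ?_
        rw [Finset.mul_sum, Finset.mul_sum]
        exact Finset.sum_congr rfl fun S _ => by ring
    _ = ∑ S : Finset (Fin n), ∑ x, c S * (pw n p x * (g x * chi n p S x)) := Finset.sum_comm
    _ = _ := by
        refine Finset.sum_congr rfl fun S _ => ?_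
        show _ = c S * ∑ x, pw n p x * (g x * chi n p S x)
        rw [Finset.mul_sum]

lemma mulVec_sum_chi (M : Matrix (Fin n → Bool) (Fin n → Bool) ℝ) (c : Finset (Fin n) → ℝ) :
    M.mulVec (fun x => ∑ S : Finset (Fin n), c S * chi n p S x)
      = fun x => ∑ S : Finset (Fin n), c S * M.mulVec (chi n p S) x := by
  funext x
  show ∑ y, M x y * ∑ S : Finset (Fin n), c S * chi n p S y = _
  calc (∑ y, M x y * ∑ S : Finset (Fin n), c S * chi n p S y)
      = ∑ y, ∑ S : Finset (Fin n), c S * (M x y * chi n p S y) := by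
        refine Finset.sum_congr rfl fun y _ => ?_
        rw [Finset.mul_sum]
        exact Finset.sum_congr rfl fun S _ => by ring
    _ = ∑ S : Finset (Fin n), ∑ y, c S * (M x y * chi n p S y) := Finset.sum_comm
    _ = _ := by
        refine Finset.sum_congr rfl fun S _ => ?_
        rw [← Finset.mul_sum]
        rfl


theorem series_identity (n : ℕ) (hn : 1 ≤ n) (p : ℝ) (hp0 : 0 < p) (hp1 : p < 1)
    (f : (Fin n → Bool) → ℝ) (hf : ∀ x, f x = 0 ∨ f x = 1) :
    Summable (fun k : ℕ => (n : ℝ) ^ (k + 2) / (Nat.factorial (k + 2)) *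
        pTM n p (QdelM n p f * (QM n p - 1) ^ k * QdelM n p f) (fun _ => 1)) ∧
    2 * (∑' k : ℕ, (n : ℝ) ^ (k + 2) / (Nat.factorial (k + 2)) *
        pTM n p (QdelM n p f * (QM n p - 1) ^ k * QdelM n p f) (fun _ => 1)) =
      ((n : ℝ) * pTM n p (QdelM n p f) (fun _ => 1)) ^ 2 +
      2 * ∑ S ∈ Finset.univ.filter (fun S : Finset (Fin n) => S ≠ ∅),
        ((Real.exp (-(S.card : ℝ)) - (1 - (S.card : ℝ))) / (S.card : ℝ) ^ 2) *
          ((n : ℝ) * pTM n p (QdelM n p f) (chi n p S)) ^ 2 := by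
  classical
  have hne : (n : ℝ) ≠ 0 := Nat.cast_ne_zero.mpr (by omega)
  obtain ⟨v, hv⟩ : ∃ v, (QdelM n p f).mulVec (fun _ => 1) = v := ⟨_, rfl⟩
  obtain ⟨a, ha⟩ : ∃ a, (fun S : Finset (Fin n) => binner n p v (chi n p S)) = a := ⟨_, rfl⟩
  have haS : ∀ S : Finset (Fin n), binner n p v (chi n p S) = a S := fun S => congrFun ha S
  have hvx : v = fun x => ∑ S : Finset (Fin n), a S * chi n p S x := by
    funext x
    rw [← hv]
    rw [expansion hp0 hp1 ((QdelM n p f).mulVec (fun _ => 1)) x]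
    refine Finset.sum_congr rfl fun S _ => ?_
    rw [← haS S, ← hv]
    rfl
  -- main term identity
  have hterm : ∀ k : ℕ, pTM n p (QdelM n p f * (QM n p - 1) ^ k * QdelM n p f) (fun _ => 1)
      = ∑ S : Finset (Fin n), (a S * (-(S.card : ℝ) / n) ^ k) * a S := by
    intro k
    rw [pTM_eq, ← Matrix.mulVec_mulVec, ← Matrix.mulVec_mulVec, hv, pT_Qdel, hv]
    have h2 : ((QM n p - 1) ^ k).mulVec v
        = fun x => ∑ S : Finset (Fin n), (a S * (-(S.card : ℝ) / n) ^ k) * chi n p S x := by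
      conv_lhs => rw [hvx]
      rw [mulVec_sum_chi]
      funext x
      refine Finset.sum_congr rfl fun S _ => ?_
      rw [QM_sub_one_pow_mulVec_chi hn hp0 hp1]
      ring
    rw [h2, binner_sum_right]
    exact Finset.sum_congr rfl fun S _ => by rw [haS S]
  have hterm2 : ∀ k : ℕ, (n : ℝ) ^ (k + 2) / (Nat.factorial (k + 2)) *
        pTM n p (QdelM n p f * (QM n p - 1) ^ k * QdelM n p f) (fun _ => 1)
      = ∑ S : Finset (Fin n),
          (n : ℝ) ^ 2 * (a S) ^ 2 * ((-(S.card : ℝ)) ^ k / (Nat.factorial (k + 2))) := by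
    intro k
    rw [hterm k, Finset.mul_sum]
    refine Finset.sum_congr rfl fun S _ => ?_
    rw [div_pow, pow_add]
    have hnk : ((n : ℝ)) ^ k ≠ 0 := pow_ne_zero _ hne
    have hfk : ((Nat.factorial (k + 2) : ℝ)) ≠ 0 := by
      exact_mod_cast Nat.factorial_ne_zero (k + 2)
    field_simp
  have hsumS : ∀ S : Finset (Fin n), Summable (fun k : ℕ =>
      (n : ℝ) ^ 2 * (a S) ^ 2 * ((-(S.card : ℝ)) ^ k / (Nat.factorial (k + 2)))) :=
    fun S => (summable_aux _).mul_left _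
  have hsum : Summable (fun k : ℕ => ∑ S : Finset (Fin n),
      (n : ℝ) ^ 2 * (a S) ^ 2 * ((-(S.card : ℝ)) ^ k / (Nat.factorial (k + 2)))) :=
    summable_sum (fun S _ => hsumS S)
  constructor
  · rw [funext hterm2]; exact hsum
  · rw [tsum_congr hterm2, Summable.tsum_finsetSum (fun S _ => hsumS S)]
    have htS : ∀ S : Finset (Fin n), (∑' k : ℕ,
        (n : ℝ) ^ 2 * (a S) ^ 2 * ((-(S.card : ℝ)) ^ k / (Nat.factorial (k + 2))))
        = (n : ℝ) ^ 2 * (a S) ^ 2 * (if S = ∅ then (1:ℝ)/2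
            else (Real.exp (-(S.card : ℝ)) - (1 - (S.card : ℝ))) / (S.card : ℝ) ^ 2) := by
      intro S
      rw [tsum_mul_left]
      by_cases hS : S = ∅
      · subst hS
        have h0 : (-(((∅ : Finset (Fin n)).card : ℝ))) = 0 := by simp
        rw [if_pos rfl, h0, tsum_E_zero]
      · rw [if_neg hS]
        have hcard : (S.card : ℝ) ≠ 0 := by
          have : S.card ≠ 0 := fun h => hS (Finset.card_eq_zero.mp h)
          exact_mod_cast this
        rw [tsum_E_pos _ hcard]
    rw [Finset.sum_congr rfl fun S _ => htS S]
    rw [← Finset.sum_filter_add_sum_filter_not Finset.univ (fun S : Finset (Fin n) => S = ∅)]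
    have hfilter : Finset.univ.filter (fun S : Finset (Fin n) => S = ∅) = {∅} := by
      ext T; simp
    rw [hfilter, Finset.sum_singleton, if_pos rfl]
    have hsecond : ∑ S ∈ Finset.univ.filter (fun S : Finset (Fin n) => ¬ S = ∅),
        (n : ℝ) ^ 2 * (a S) ^ 2 * (if S = ∅ then (1:ℝ)/2
            else (Real.exp (-(S.card : ℝ)) - (1 - (S.card : ℝ))) / (S.card : ℝ) ^ 2)
        = ∑ S ∈ Finset.univ.filter (fun S : Finset (Fin n) => S ≠ ∅),
          ((Real.exp (-(S.card : ℝ)) - (1 - (S.card : ℝ))) / (S.card : ℝ) ^ 2) *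
            ((n : ℝ) * a S) ^ 2 := by
      refine Finset.sum_congr (by simp [ne_eq]) fun S hS => ?_
      rw [Finset.mem_filter] at hS
      rw [if_neg hS.2]
      ring
    rw [hsecond]
    have hchi : chi n p (∅ : Finset (Fin n)) = fun _ => 1 := by
      funext x; rw [chi, Finset.prod_empty]
    have hp1' : pTM n p (QdelM n p f) (fun _ => 1) = a ∅ := by
      rw [pTM_eq, pT_Qdel, hv, ← haS ∅, hchi]
    have hpS : ∀ S : Finset (Fin n), pTM n p (QdelM n p f) (chi n p S) = a S := by
      intro S
      rw [pTM_eq, pT_Qdel, hv, haS S]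
    rw [hp1']
    simp only [hpS]
    ring
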